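/- arXiv:1404.3544 — 3 statements merged into one kernel-verified Lean document; each statement's English description precedes it below -/
import Mathlib

section
/- Let H be an N×N complex Hadamard matrix and let Hᵗ denote its transpose (also complex Hadamard). For p, r ≥ 1 let T_p(H) ∈ M_{N^p}(ℂ) and T_r(Hᵗ) ∈ M_{N^r}(ℂ) be the associated matrices, (T_p(H))_{i₁…i_p, j₁…j_p} = tr(P^H_{i₁j₁}⋯P^H_{i_pj_p}) and similarly for Hᵗ. Then the following moment/truncation duality holds: Tr(T_p(H)^r)/N^p = Tr(T_r(Hᵗ)^p)/N^r. -/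
open Matrix BigOperators ComplexConjugate

/-- `H` is a complex Hadamard matrix. -/
def IsHadamard {I : Type*} [Fintype I] [DecidableEq I] (H : Matrix I I ℂ) : Prop :=
  (∀ i j, ‖H i j‖ = 1) ∧
  (∀ i j, ∑ k, H i k * conj (H j k) = if i = j then (Fintype.card I : ℂ) else 0)

/-- The rank-one projection `P_{ij} = Proj(H_i/H_j)`. -/
noncomputable def hadamardProj {I : Type*} [Fintype I] (H : Matrix I I ℂ) (i j : I) :
    Matrix I I ℂ :=
  fun k l => (Fintype.card I : ℂ)⁻¹ * H i k * H j l * conj (H i l * H j k)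

/-- The matrix `T_p(H) ∈ M_{N^p}(ℂ)`, with entries
`(T_p)_{i₁…i_p,j₁…j_p} = tr(P_{i₁j₁}⋯P_{i_pj_p})`, `tr = Tr/N` the normalized trace. -/
noncomputable def Tmat {I : Type*} [Fintype I] [DecidableEq I] (H : Matrix I I ℂ) (p : ℕ) :
    Matrix (Fin p → I) (Fin p → I) ℂ :=
  fun i j => (Fintype.card I : ℂ)⁻¹ *
    Matrix.trace ((List.ofFn fun s => hadamardProj H (i s) (j s)).prod)

/-!
Expanding the trace of `T_p(H)^r` entrywise writes it, up to the factor `N^{-r}`, as a sum over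
pairs of arrays `x, k : Fin r → Fin p → I` of the product over all cells `(a, s)` of the entries
`(P_{x(a,s), x(a+1,s)})_{k(a,s), k(a,s+1)}`, both indices running cyclically. Since
`(P^{Hᵗ}_{k k'})_{i i'} = (P^H_{i i'})_{k k'}`, transposing both arrays turns this sum for
`(H, p, r)` into the one for `(Hᵗ, r, p)`, and the normalizations `N^{-r}/N^p` and `N^{-p}/N^r`
agree.
-/

theorem sum_fun_fin_succ_eq_sum_snoc {n : ℕ} {α M : Type*} [Fintype α] [AddCommMonoid M]
    (f : (Fin (n + 1) → α) → M) :
    ∑ k, f k = ∑ x : α, ∑ k : Fin n → α, f (Fin.snoc k x) := by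
  rw [← (Fin.snocEquiv fun _ => α).sum_comp, Fintype.sum_prod_type]
  rfl

theorem Fin.snoc_self_zero_succ {q : ℕ} {α : Type*} (k : Fin (q + 1) → α) (s : Fin (q + 1)) :
    (Fin.snoc k (k 0) : Fin (q + 2) → α) s.succ = k (s + 1) := by
  induction s using Fin.lastCases with
  | last => simp [Fin.last_add_one]
  | cast t => rw [Fin.coeSucc_eq_succ, Fin.succ_castSucc, Fin.snoc_castSucc]

namespace Matrix

variable {I R : Type*} [Fintype I] [DecidableEq I] [CommSemiring R]

/-- `k s` is the row index of the `s`-th factor; the entry of `1` forces `k 0 = i`, or `i = j`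
for the empty product. -/
theorem list_ofFn_prod_apply {n : ℕ} (M : Fin n → Matrix I I R) (i j : I) :
    (List.ofFn M).prod i j = ∑ k : Fin n → I,
      (1 : Matrix I I R) i ((Fin.snoc k j : Fin (n + 1) → I) 0) *
        ∏ s, M s (k s) ((Fin.snoc k j : Fin (n + 1) → I) s.succ) := by
  induction n generalizing j with
  | zero =>
    simp only [List.ofFn_zero, List.prod_nil, Finset.univ_unique, Finset.univ_eq_empty,
      Finset.prod_empty, mul_one, Finset.sum_singleton]
    rfl
  | succ n ih =>
    rw [List.ofFn_succ', List.prod_concat, mul_apply, sum_fun_fin_succ_eq_sum_snoc]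
    refine Finset.sum_congr rfl fun m _ => ?_
    rw [ih, Finset.sum_mul]
    refine Finset.sum_congr rfl fun k _ => ?_
    rw [show (0 : Fin (n + 2)) = Fin.castSucc 0 from rfl, Fin.snoc_castSucc]
    simp only [Fin.prod_univ_castSucc, Fin.snoc_castSucc, Fin.succ_castSucc,
      Fin.succ_last, Fin.snoc_last]
    ring

theorem trace_list_ofFn_prod {n : ℕ} [NeZero n] (M : Fin n → Matrix I I R) :
    trace (List.ofFn M).prod = ∑ k : Fin n → I, ∏ s, M s (k s) (k (s + 1)) := by
  obtain ⟨q, rfl⟩ : ∃ q, n = q + 1 := Nat.exists_eq_succ_of_ne_zero (NeZero.ne n)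
  rw [trace]
  simp only [diag_apply, list_ofFn_prod_apply]
  rw [Finset.sum_comm]
  refine Finset.sum_congr rfl fun k _ => ?_
  simp only [Fin.snoc_apply_zero, one_apply, ite_mul, one_mul, zero_mul, Finset.sum_ite_eq',
    Finset.mem_univ, if_true, Fin.snoc_self_zero_succ]

theorem trace_pow_eq_sum {r : ℕ} [NeZero r] (A : Matrix I I R) :
    trace (A ^ r) = ∑ x : Fin r → I, ∏ a, A (x a) (x (a + 1)) := by
  rw [← trace_list_ofFn_prod, List.ofFn_const, List.prod_replicate]

end Matrix

section Hadamard

variable {I : Type*} [Fintype I]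

theorem hadamardProj_transpose_apply (H : Matrix I I ℂ) (i i' k k' : I) :
    hadamardProj Hᵀ k k' i i' = hadamardProj H i i' k k' := by
  simp only [hadamardProj, transpose_apply, map_mul]
  ring

noncomputable def gridSum (H : Matrix I I ℂ) (p r : ℕ) [NeZero p] [NeZero r] : ℂ :=
  ∑ x : Fin r → Fin p → I, ∑ k : Fin r → Fin p → I,
    ∏ a, ∏ s, hadamardProj H (x a s) (x (a + 1) s) (k a s) (k a (s + 1))

theorem gridSum_transpose (H : Matrix I I ℂ) (p r : ℕ) [NeZero p] [NeZero r] :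
    gridSum Hᵀ r p = gridSum H p r := by
  rw [gridSum, Finset.sum_comm]
  refine Fintype.sum_equiv (Equiv.piComm _) _ _ fun k => ?_
  refine Fintype.sum_equiv (Equiv.piComm _) _ _ fun x => ?_
  rw [Finset.prod_comm]
  simp only [Equiv.piComm_apply, hadamardProj_transpose_apply]

variable [DecidableEq I]

theorem Tmat_apply (H : Matrix I I ℂ) {p : ℕ} [NeZero p] (x y : Fin p → I) :
    Tmat H p x y = (Fintype.card I : ℂ)⁻¹ *
      ∑ k : Fin p → I, ∏ s, hadamardProj H (x s) (y s) (k s) (k (s + 1)) := by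
  rw [Tmat, trace_list_ofFn_prod]

theorem trace_Tmat_pow (H : Matrix I I ℂ) (p r : ℕ) [NeZero p] [NeZero r] :
    trace (Tmat H p ^ r) = (Fintype.card I : ℂ)⁻¹ ^ r * gridSum H p r := by
  simp only [trace_pow_eq_sum, Tmat_apply, Finset.prod_mul_distrib, Finset.prod_const,
    Finset.card_univ, Fintype.card_fin, Fintype.prod_sum, gridSum, Finset.mul_sum]

end Hadamard

theorem moment_truncation_duality_general (N : ℕ) (p r : ℕ) (hp : 1 ≤ p) (hr : 1 ≤ r)
    (H : Matrix (Fin N) (Fin N) ℂ) :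
    Matrix.trace (Tmat H p ^ r) / (N : ℂ) ^ p =
      Matrix.trace (Tmat Hᵀ r ^ p) / (N : ℂ) ^ r := by
  have : NeZero p := ⟨Nat.one_le_iff_ne_zero.mp hp⟩
  have : NeZero r := ⟨Nat.one_le_iff_ne_zero.mp hr⟩
  rw [trace_Tmat_pow, trace_Tmat_pow, gridSum_transpose, Fintype.card_fin, div_eq_mul_inv,
    div_eq_mul_inv, ← inv_pow, ← inv_pow]
  ring

/-- the moment/truncation duality: for a complex Hadamard matrix `H` of
size `N` and its transpose `Hᵗ`, and all `p, r ≥ 1`,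
`Tr(T_p(H)^r)/N^p = Tr(T_r(Hᵗ)^p)/N^r`. -/
theorem moment_truncation_duality (N : ℕ) (hN : 1 ≤ N) (p r : ℕ) (hp : 1 ≤ p) (hr : 1 ≤ r)
    (H : Matrix (Fin N) (Fin N) ℂ) (hH : _root_.IsHadamard H) :
    Matrix.trace (Tmat H p ^ r) / (N : ℂ) ^ p =
      Matrix.trace (Tmat Hᵀ r ^ p) / (N : ℂ) ^ r :=
  moment_truncation_duality_general N p r hp hr H
end

section
/- Let Q ∈ M_{M×N}(ℂ) have all entries of modulus 1, let H = F_M ⊗_Q F_N be the deformed Fourier matrix, and for x ∈ ℤ/Mℤ let R^x_{ab,cd} = (1/M)·Σ_{m∈ℤ/Mℤ} w^{mx}·Q_{ma}Q_{md}·conj(Q_{mc}Q_{mb}), w = e^{2πi/M}. Then for every r ≥ 1 the truncation matrix of H satisfies X_{(i₁,a₁)…(i_r,a_r), (j₁,b₁)…(j_r,b_r)} = δ_{a₁−b₁, a₂−b₂, …, a_r−b_r} · R^{i₁+j₂−j₁−i₂}_{a₁b₁, a₂b₂} ⋯ R^{i_r+j₁−j_r−i₁}_{a_rb_r, a₁b₁},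 where δ_{a₁−b₁,…,a_r−b_r} equals 1 if a₁−b₁ = a₂−b₂ = ⋯ = a_r−b_r in ℤ/Nℤ and 0 otherwise, and the exponents of R are computed in ℤ/Mℤ with cyclic index conventions. -/
open Matrix BigOperators ComplexConjugate

/-- The profile matrix of `H`: `Q^H_{ab,cd} = (1/n)·∑_i H_{ia}·H_{id}·conj(H_{ib}·H_{ic})`. -/
noncomputable def profile {I : Type*} [Fintype I] (H : Matrix I I ℂ) (a b c d : I) : ℂ :=
  (Fintype.card I : ℂ)⁻¹ * ∑ i, H i a * H i d * conj (H i b * H i c)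

/-- The truncation matrix of order `r`:
`X_{a₁…a_r,b₁…b_r} = Q_{a₁b₁,a₂b₂}⋯Q_{a_rb_r,a₁b₁}` (cyclic indices, via `finRotate`). -/
noncomputable def trunc {I : Type*} [Fintype I] (H : Matrix I I ℂ) (r : ℕ) :
    Matrix (Fin r → I) (Fin r → I) ℂ :=
  fun a b => ∏ s : Fin r,
    profile H (a s) (b s) (a (finRotate r s)) (b (finRotate r s))

/-- The deformed Fourier matrix (Diţă deformation) `F_M ⊗_Q F_N`, with entries
`H_{(i,a),(j,b)} = Q_{ib}·w^{ij}·z^{ab}`, `w = e^{2πi/M}`, `z = e^{2πi/N}`. -/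
noncomputable def defFourier (M N : ℕ) (Q : Matrix (ZMod M) (ZMod N) ℂ) :
    Matrix (ZMod M × ZMod N) (ZMod M × ZMod N) ℂ :=
  fun p q => Q p.1 q.2 *
    Complex.exp (2 * Real.pi * Complex.I * ((p.1.val : ℂ) * (q.1.val : ℂ)) / M) *
    Complex.exp (2 * Real.pi * Complex.I * ((p.2.val : ℂ) * (q.2.val : ℂ)) / N)

/-- For `x ∈ ℤ/Mℤ`, the matrix `R^x ∈ M_{N²}(ℂ)` with entries
`R^x_{ab,cd} = (1/M)·∑_m w^{mx}·Q_{ma}·Q_{md}·conj(Q_{mc}·Q_{mb})`, `w = e^{2πi/M}`. -/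
noncomputable def Rmat (M N : ℕ) [NeZero M] (Q : Matrix (ZMod M) (ZMod N) ℂ)
    (x : ZMod M) (a b c d : ZMod N) : ℂ :=
  (M : ℂ)⁻¹ * ∑ m : ZMod M,
    Complex.exp (2 * Real.pi * Complex.I * ((m.val : ℂ) * (x.val : ℂ)) / M) *
      Q m a * Q m d * conj (Q m c * Q m b)

/-!
Write the entries of `F_M ⊗_Q F_N` with the standard characters `ψ_M`, `ψ_N` of `ℤ/Mℤ` and
`ℤ/Nℤ`. The summand `(m, n)` of a profile entry `Q^H_{(i,a)(j,b),(k,c)(l,d)}` then factors as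
`ψ_M(m(i+l-j-k)) Q_{ma} Q_{md} conj(Q_{mc} Q_{mb}) · ψ_N(n((a-b)-(c-d)))`, and orthogonality of
characters in `n` turns it into `δ_{a-b,c-d} · R^{i+l-j-k}_{ab,cd}`. In the cyclic product the
deltas `δ_{a_s-b_s, a_{s+1}-b_{s+1}}` multiply to the single delta `δ_{a₁-b₁,…,a_r-b_r}`.
-/

open ZMod (stdAddChar)

lemma ZMod.stdAddChar_mul {n : ℕ} [NeZero n] (m x : ZMod n) :
    stdAddChar (m * x) =
      Complex.exp (2 * Real.pi * Complex.I * ((m.val : ℂ) * (x.val : ℂ)) / n) := by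
  have hmx : m * x = ((m.val * x.val : ℕ) : ZMod n) := by simp
  rw [hmx, ZMod.stdAddChar_apply, ZMod.toCircle_natCast]
  push_cast
  rfl

lemma defFourier_apply (M N : ℕ) [NeZero M] [NeZero N] (Q : Matrix (ZMod M) (ZMod N) ℂ)
    (m i : ZMod M) (n a : ZMod N) :
    defFourier M N Q (m, n) (i, a) = Q m a * stdAddChar (m * i) * stdAddChar (n * a) := by
  simp only [defFourier, ZMod.stdAddChar_mul]

lemma Rmat_eq_sum_stdAddChar (M N : ℕ) [NeZero M] (Q : Matrix (ZMod M) (ZMod N) ℂ)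
    (x : ZMod M) (a b c d : ZMod N) :
    Rmat M N Q x a b c d =
      (M : ℂ)⁻¹ * ∑ m : ZMod M, stdAddChar (m * x) * Q m a * Q m d * conj (Q m c * Q m b) := by
  simp only [Rmat, ZMod.stdAddChar_mul]

lemma defFourier_mul_conj (M N : ℕ) [NeZero M] [NeZero N] (Q : Matrix (ZMod M) (ZMod N) ℂ)
    (i j k l m : ZMod M) (a b c d n : ZMod N) :
    defFourier M N Q (m, n) (i, a) * defFourier M N Q (m, n) (l, d) *
        conj (defFourier M N Q (m, n) (j, b) * defFourier M N Q (m, n) (k, c)) =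
      stdAddChar (m * (i + l - j - k)) * Q m a * Q m d * conj (Q m c * Q m b) *
        stdAddChar (n * (a - b - (c - d))) := by
  simp only [defFourier_apply, sub_eq_add_neg, neg_add, neg_neg, mul_add, mul_neg,
    AddChar.map_add_eq_mul, AddChar.map_neg_eq_conj, map_mul]
  ring

lemma profile_defFourier (M N : ℕ) [NeZero M] [NeZero N] (Q : Matrix (ZMod M) (ZMod N) ℂ)
    (i j k l : ZMod M) (a b c d : ZMod N) :
    profile (defFourier M N Q) (i, a) (j, b) (k, c) (l, d) =
      (if a - b = c - d then 1 else 0) * Rmat M N Q (i + l - j - k) a b c d := by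
  rw [profile, Fintype.sum_prod_type]
  simp only [defFourier_mul_conj, ← Finset.sum_mul_sum,
    AddChar.sum_mulShift _ (ZMod.isPrimitive_stdAddChar N), sub_eq_zero,
    Rmat_eq_sum_stdAddChar, Fintype.card_prod, ZMod.card]
  split_ifs
  · have hM : (M : ℂ) ≠ 0 := NeZero.ne _
    have hN : (N : ℂ) ≠ 0 := NeZero.ne _
    push_cast
    field_simp
  · simp

open Fin.NatCast in
lemma forall_eq_comp_finRotate_iff {α : Type*} {r : ℕ} (f : Fin r → α) :
    (∀ s, f s = f (finRotate r s)) ↔ ∀ s t, f s = f t := by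
  refine ⟨fun h => ?_, fun h s => h _ _⟩
  cases r with
  | zero => exact fun s => s.elim0
  | succ n =>
    have h0 : ∀ k : ℕ, f (k : Fin (n + 1)) = f 0 := by
      intro k
      induction k with
      | zero => simp
      | succ k ih => rw [Nat.cast_add_one, ← finRotate_apply, ← h, ih]
    intro s t
    rw [← Fin.cast_val_eq_self s, ← Fin.cast_val_eq_self t, h0, h0]

theorem trunc_defFourier_general (M N : ℕ) [NeZero M] [NeZero N]
    (Q : Matrix (ZMod M) (ZMod N) ℂ)
    (r : ℕ)
    (i j : Fin r → ZMod M) (a b : Fin r → ZMod N) :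
    trunc (defFourier M N Q) r (fun s => (i s, a s)) (fun s => (j s, b s)) =
      (if ∀ s t : Fin r, a s - b s = a t - b t then 1 else 0) *
        ∏ s : Fin r,
          Rmat M N Q (i s + j (finRotate r s) - j s - i (finRotate r s))
            (a s) (b s) (a (finRotate r s)) (b (finRotate r s)) := by
  rw [trunc]
  simp only [profile_defFourier, Finset.prod_mul_distrib, Fintype.prod_boole,
    forall_eq_comp_finRotate_iff (fun s => a s - b s)]

/-- the truncation matrix of the deformed Fourier matrix `H = F_M ⊗_Q F_N`
is given by `X_{(i₁,a₁)…(i_r,a_r),(j₁,b₁)…(j_r,b_r)} = δ_{a₁−b₁,…,a_r−b_r} ·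
R^{i₁+j₂−j₁−i₂}_{a₁b₁,a₂b₂} ⋯ R^{i_r+j₁−j_r−i₁}_{a_rb_r,a₁b₁}` (cyclic indices). -/
theorem trunc_defFourier (M N : ℕ) [NeZero M] [NeZero N]
    (Q : Matrix (ZMod M) (ZMod N) ℂ) (hQ : ∀ i a, ‖Q i a‖ = 1)
    (r : ℕ) (hr : 1 ≤ r)
    (i j : Fin r → ZMod M) (a b : Fin r → ZMod N) :
    trunc (defFourier M N Q) r (fun s => (i s, a s)) (fun s => (j s, b s)) =
      (if ∀ s t : Fin r, a s - b s = a t - b t then 1 else 0) *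
        ∏ s : Fin r,
          Rmat M N Q (i s + j (finRotate r s) - j s - i (finRotate r s))
            (a s) (b s) (a (finRotate r s)) (b (finRotate r s)) :=
  trunc_defFourier_general M N Q r i j a b
end

section
/- Let H be an N×N complex Hadamard matrix and p ≥ 1. For a, b ∈ {1,…,N} and multi-indices i = (i₁,…,i_p), j = (j₁,…,j_p) ∈ {1,…,N}^p, define w_{ab}(i,j) = N^{−p} · Σ_{a₁,…,a_{p−1}} Π_{s=1}^{p} H_{i_s a_{s−1}} H_{j_s a_s} · conj(H_{i_s a_s} H_{j_s a_{s−1}}), where a₀ = a and a_p = b. Then: (1) for all a, b, i, j one has Σ_{k ∈ {1,…,N}^p} w_{ab}(i,k)·w_{ab}(k,j) = w_{ab}(i,j) (idempotency); and (2) for all b, i, j one has Σ_{a=1}^{N} w_{ab}(i,j) = δ_{i₁j₁}·δ_{i₂j₂}⋯δ_{i_pj_p} (sum-one condition). -/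
/-!
Write `ξᵘᵛ_x = H_{xu} / H_{xv}` (`colRatio H u v`). For a path `c` from `a` to `b`, the summand of
`w_{ab}(i,j)` is `v_c(i) · conj (v_c(j))` with `v_c = ξ^{c₀c₁} ⊗ ⋯ ⊗ ξ^{c_{p-1}c_p}`. Hence
`w_{ab} = N^{-p} V D_a V*`, where `V` has the columns `v_c` for all paths `c` ending at `b`
and `D_a` is the diagonal projection onto the paths starting at `a`.

Column orthogonality of `H` makes `ξᵘᵛ ⟂ ξᵘ'ᵛ` for `u ≠ u'`. If two paths ending at `b` differ,
their tensor factors at the last step where they disagree have this form, so `V* V = N^p`; as `V`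
is square, also `V V* = N^p`. The first identity makes `N^{-p} V D_a V*` idempotent, the second,
together with `∑_a D_a = 1`, gives the sum-one condition.
-/

open Matrix BigOperators ComplexConjugate

/-- The quantity `w_{ab}(i,j) = N^{-p}·∑_{a₁…a_{p−1}} ∏_{s=1}^p
H_{i_s a_{s−1}}·H_{j_s a_s}·conj(H_{i_s a_s}·H_{j_s a_{s−1}})`, with `a₀ = a`, `a_p = b`.
The sum over the interior indices is implemented as a sum over all paths
`c : Fin (p+1) → Fin N` with `c 0 = a` and `c p = b`. -/
noncomputable def wCoef (N : ℕ) (H : Matrix (Fin N) (Fin N) ℂ) (p : ℕ)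
    (a b : Fin N) (i j : Fin p → Fin N) : ℂ :=
  ((N : ℂ) ^ p)⁻¹ * ∑ c : Fin (p + 1) → Fin N,
    if c 0 = a ∧ c (Fin.last p) = b then
      ∏ s : Fin p,
        H (i s) (c s.castSucc) * H (j s) (c s.succ) *
          conj (H (i s) (c s.succ) * H (j s) (c s.castSucc))
    else 0

lemma Matrix.mul_eq_smul_one_comm_of_equiv {m n K : Type*} [Fintype m] [Fintype n]
    [DecidableEq m] [DecidableEq n] [Field K] {A : Matrix m n K} {B : Matrix n m K} (e : m ≃ n)
    {r : K} (hr : r ≠ 0) : A * B = r • 1 ↔ B * A = r • 1 := by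
  rw [← inv_smul_eq_iff₀ hr, ← inv_smul_eq_iff₀ hr, ← Matrix.smul_mul, ← Matrix.mul_smul,
    Matrix.mul_eq_one_comm_of_equiv e]

lemma isIdempotentElem_inv_smul_mul_mul_conjTranspose {m n K : Type*} [Fintype m] [Fintype n]
    [DecidableEq n] [Field K] [StarRing K] {V : Matrix m n K} {D : Matrix n n K} {r : K}
    (hr : r ≠ 0) (hV : Vᴴ * V = r • 1)
    (hD : IsIdempotentElem D) : IsIdempotentElem (r⁻¹ • (V * D * Vᴴ)) := by
  calc r⁻¹ • (V * D * Vᴴ) * r⁻¹ • (V * D * Vᴴ)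
      = (r⁻¹ * r⁻¹) • (V * D * (Vᴴ * V) * D * Vᴴ) := by
        simp only [Matrix.smul_mul, Matrix.mul_smul, smul_smul, Matrix.mul_assoc]
    _ = r⁻¹ • (V * D * Vᴴ) := by
        rw [hV, Matrix.mul_smul, Matrix.mul_one, Matrix.smul_mul, Matrix.mul_assoc V D D,
          hD.eq, Matrix.smul_mul, smul_smul, mul_assoc, inv_mul_cancel₀ hr, mul_one]

namespace IsHadamard

variable {I : Type*} [Fintype I] [DecidableEq I] {H : Matrix I I ℂ}

lemma mul_conj_self (hH : _root_.IsHadamard H) (x u : I) : H x u * conj (H x u) = 1 := by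
  rw [Complex.mul_conj', hH.1]
  norm_num

lemma mul_conjTranspose (hH : _root_.IsHadamard H) : H * Hᴴ = (Fintype.card I : ℂ) • 1 := by
  ext x y
  simp [Matrix.mul_apply, hH.2, Matrix.one_apply]

lemma conjTranspose_mul [Nonempty I] (hH : _root_.IsHadamard H) :
    Hᴴ * H = (Fintype.card I : ℂ) • 1 :=
  (Matrix.mul_eq_smul_one_comm_of_equiv (Equiv.refl I) (by simp)).mp hH.mul_conjTranspose

end IsHadamard

lemma Fin.exists_castSucc_ne_and_succ_eq {α : Type*} {p : ℕ} {c c' : Fin (p + 1) → α}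
    (hne : c ≠ c') (hlast : c (Fin.last p) = c' (Fin.last p)) :
    ∃ s : Fin p, c s.castSucc ≠ c' s.castSucc ∧ c s.succ = c' s.succ := by
  by_contra! h
  exact hne <| funext <| Fin.reverseInduction hlast fun s hs => by_contra fun hs' => h s hs' hs

section Paths

variable {I : Type*} [Fintype I] [DecidableEq I] (H : Matrix I I ℂ) (p : ℕ)

abbrev PathTo (b : I) := {c : Fin (p + 1) → I // c (Fin.last p) = b}

def PathTo.equivInit (b : I) : (Fin p → I) ≃ PathTo p b where
  toFun c := ⟨Fin.snoc c b, Fin.snoc_last _ _⟩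
  invFun c := Fin.init c.1
  left_inv c := Fin.init_snoc _ _
  right_inv c := Subtype.ext <| by simpa only [c.2] using Fin.snoc_init_self c.1

def colRatio (u v : I) : I → ℂ := fun x => H x u * conj (H x v)

def pathMatrix (b : I) : Matrix (Fin p → I) (PathTo p b) ℂ :=
  fun i c => ∏ s, colRatio H (c.1 s.castSucc) (c.1 s.succ) (i s)

noncomputable def wMatrix (a b : I) : Matrix (Fin p → I) (Fin p → I) ℂ :=
  ((Fintype.card I : ℂ) ^ p)⁻¹ • (pathMatrix H p b *
    Matrix.diagonal (fun c : PathTo p b => if c.1 0 = a then (1 : ℂ) else 0) * (pathMatrix H p b)ᴴ)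

variable {H}

lemma sum_conj_colRatio_mul_colRatio (hH : _root_.IsHadamard H) [Nonempty I] (u u' v : I) :
    ∑ x, conj (colRatio H u v x) * colRatio H u' v x =
      if u = u' then (Fintype.card I : ℂ) else 0 := by
  have h := congrFun (congrFun hH.conjTranspose_mul u) u'
  simp only [Matrix.mul_apply, Matrix.conjTranspose_apply, Matrix.smul_apply,
    Matrix.one_apply, smul_eq_mul, mul_ite, mul_one, mul_zero, RCLike.star_def] at h
  rw [← h]
  refine Finset.sum_congr rfl fun x _ => ?_
  rw [colRatio, colRatio, map_mul, Complex.conj_conj]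
  linear_combination (conj (H x u) * H x u') * hH.mul_conj_self x v

lemma conjTranspose_pathMatrix_mul (hH : _root_.IsHadamard H) (b : I) :
    (pathMatrix H p b)ᴴ * pathMatrix H p b = ((Fintype.card I : ℂ) ^ p) • 1 := by
  have : Nonempty I := ⟨b⟩
  ext c c'
  have hentry : ((pathMatrix H p b)ᴴ * pathMatrix H p b) c c' =
      ∏ s : Fin p, ∑ x, conj (colRatio H (c.1 s.castSucc) (c.1 s.succ) x) *
        colRatio H (c'.1 s.castSucc) (c'.1 s.succ) x := by
    rw [Fintype.prod_sum]
    simp only [Matrix.mul_apply, Matrix.conjTranspose_apply, pathMatrix, RCLike.star_def,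
      map_prod, Finset.prod_mul_distrib]
  rw [hentry, Matrix.smul_apply, Matrix.one_apply, smul_eq_mul]
  split_ifs with hcc'
  · subst hcc'
    simp [sum_conj_colRatio_mul_colRatio hH]
  · obtain ⟨s, hs_ne, hs_eq⟩ := Fin.exists_castSucc_ne_and_succ_eq
      (fun h => hcc' (Subtype.ext h)) (c.2.trans c'.2.symm)
    rw [mul_zero]
    refine Finset.prod_eq_zero (Finset.mem_univ s) ?_
    rw [← hs_eq, sum_conj_colRatio_mul_colRatio hH, if_neg hs_ne]

lemma pathMatrix_mul_conjTranspose (hH : _root_.IsHadamard H) (b : I) :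
    pathMatrix H p b * (pathMatrix H p b)ᴴ = ((Fintype.card I : ℂ) ^ p) • 1 :=
  have : Nonempty I := ⟨b⟩
  (Matrix.mul_eq_smul_one_comm_of_equiv (PathTo.equivInit p b) (by simp)).mpr
    (conjTranspose_pathMatrix_mul p hH b)

lemma isIdempotentElem_wMatrix (hH : _root_.IsHadamard H) (a b : I) :
    IsIdempotentElem (wMatrix H p a b) := by
  have : Nonempty I := ⟨b⟩
  refine (isIdempotentElem_inv_smul_mul_mul_conjTranspose (by simp)
    (conjTranspose_pathMatrix_mul p hH b) ?_)
  rw [IsIdempotentElem, Matrix.diagonal_mul_diagonal]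
  congr 1
  ext c
  split_ifs <;> simp

lemma sum_wMatrix (hH : _root_.IsHadamard H) (b : I) : ∑ a, wMatrix H p a b = 1 := by
  have : Nonempty I := ⟨b⟩
  have hD : ∑ a, Matrix.diagonal (fun c : PathTo p b => if c.1 0 = a then (1 : ℂ) else 0) = 1 := by
    ext c c'
    simp [Matrix.sum_apply, Matrix.diagonal_apply, Matrix.one_apply]
  simp only [wMatrix, ← Finset.smul_sum, ← Matrix.sum_mul, ← Matrix.mul_sum, hD, Matrix.mul_one,
    pathMatrix_mul_conjTranspose p hH b, smul_smul]
  rw [inv_mul_cancel₀ (by simp), one_smul]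

end Paths

lemma wCoef_eq_wMatrix (N : ℕ) (H : Matrix (Fin N) (Fin N) ℂ) (p : ℕ) (a b : Fin N)
    (i j : Fin p → Fin N) : wCoef N H p a b i j = wMatrix H p a b i j := by
  rw [wCoef, wMatrix, Matrix.smul_apply, smul_eq_mul, Matrix.mul_apply, Fintype.card_fin]
  simp only [Matrix.mul_diagonal, Matrix.conjTranspose_apply]
  congr 1
  simp only [and_comm (a := _ = a), ite_and]
  rw [← Finset.sum_filter, Finset.sum_subtype _ (p := fun c => c (Fin.last p) = b) (by simp)]
  refine Finset.sum_congr rfl fun c _ => ?_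
  split_ifs
  · simp only [pathMatrix, colRatio, RCLike.star_def, map_prod, mul_one, ← Finset.prod_mul_distrib]
    refine Finset.prod_congr rfl fun s _ => ?_
    simp only [map_mul, Complex.conj_conj]
    ring
  · simp

theorem wCoef_magic_general (N : ℕ) (p : ℕ)
    (H : Matrix (Fin N) (Fin N) ℂ) (hH : _root_.IsHadamard H) :
    (∀ (a b : Fin N) (i j : Fin p → Fin N),
      ∑ k : Fin p → Fin N, wCoef N H p a b i k * wCoef N H p a b k j =
        wCoef N H p a b i j) ∧
    (∀ (b : Fin N) (i j : Fin p → Fin N),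
      ∑ a : Fin N, wCoef N H p a b i j =
        ∏ s : Fin p, if i s = j s then (1 : ℂ) else 0) := by
  refine ⟨fun a b i j => ?_, fun b i j => ?_⟩
  · simpa only [wCoef_eq_wMatrix, Matrix.mul_apply] using
      congrFun (congrFun (isIdempotentElem_wMatrix p hH a b).eq i) j
  · simp [wCoef_eq_wMatrix, ← Matrix.sum_apply, sum_wMatrix p hH b, Matrix.one_apply,
      Fintype.prod_boole, funext_iff]

/-- for a complex Hadamard matrix `H` and `p ≥ 1`, the coefficients
`w_{ab}(i,j)` satisfy: (1) the idempotency relation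
`∑_{k∈{1,…,N}^p} w_{ab}(i,k)·w_{ab}(k,j) = w_{ab}(i,j)`; and (2) the sum-one condition
`∑_a w_{ab}(i,j) = δ_{i₁j₁}⋯δ_{i_pj_p}`. -/
theorem wCoef_magic (N : ℕ) (hN : 1 ≤ N) (p : ℕ) (hp : 1 ≤ p)
    (H : Matrix (Fin N) (Fin N) ℂ) (hH : _root_.IsHadamard H) :
    (∀ (a b : Fin N) (i j : Fin p → Fin N),
      ∑ k : Fin p → Fin N, wCoef N H p a b i k * wCoef N H p a b k j =
        wCoef N H p a b i j) ∧
    (∀ (b : Fin N) (i j : Fin p → Fin N),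
      ∑ a : Fin N, wCoef N H p a b i j =
        ∏ s : Fin p, if i s = j s then (1 : ℂ) else 0) :=
  wCoef_magic_general N p H hH
end
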